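/- arXiv:1905.06793 — 4 statements merged into one kernel-verified Lean document; each statement's English description precedes it below -/
import Mathlib

section
/- For every x, ξ ∈ ℝ, writing ⟨ξ⟩ = √(1+ξ²), one has ∫_ℝ e^{i(x-y)ξ - ⟨ξ⟩ (x-y)²} (1 + i (x-y) ξ/⟨ξ⟩) dy = √π e^{-ξ²/(4⟨ξ⟩)} (⟨ξ⟩^{-1/2} - ξ²/(2 ⟨ξ⟩^{5/2})). In particular, the left-hand side is independent of x. -/
/-!
After the substitution `y ↦ x - y` the integrand is `g(u) (1 + a u)` with the modulated Gaussian
`g(u) = exp(-⟨ξ⟩ u² + i ξ u)` and `a = i ξ / ⟨ξ⟩`, so `x` disappears. Since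
`g' = (i ξ - 2 ⟨ξ⟩ u) g` has integral zero, the first moment is `∫ u g = (i ξ / (2⟨ξ⟩)) ∫ g`,
and the integral becomes `(1 - ξ² / (2⟨ξ⟩²))` times the Gaussian Fourier transform
`∫ g = √(π / ⟨ξ⟩) exp(-ξ² / (4⟨ξ⟩))`.
-/

open MeasureTheory Complex Real

section GaussianMoments

variable {b : ℂ} (hb : 0 < b.re) (t : ℝ)
include hb

lemma integrable_cexp_neg_mul_sq_add_I_mul :
    Integrable fun v : ℝ => cexp (-b * v ^ 2 + I * t * v) := by
  simpa only [add_zero] using integrable_cexp_quadratic hb (I * t) 0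

lemma integrable_mul_cexp_neg_mul_sq_add_I_mul :
    Integrable fun v : ℝ => (v : ℂ) * cexp (-b * v ^ 2 + I * t * v) := by
  refine ((integrable_mul_cexp_neg_mul_sq hb).bdd_mul (c := 1)
    (f := fun v : ℝ => cexp (↑(t * v) * I)) (by fun_prop)
    (ae_of_all _ fun v => (norm_exp_ofReal_mul_I (t * v)).le)).congr (ae_of_all _ fun v => ?_)
  dsimp only
  rw [mul_left_comm, ← Complex.exp_add]
  push_cast
  ring_nf

lemma integral_mul_cexp_neg_mul_sq_add_I_mul :
    ∫ v : ℝ, (v : ℂ) * cexp (-b * v ^ 2 + I * t * v) =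
      I * t / (2 * b) * ∫ v : ℝ, cexp (-b * v ^ 2 + I * t * v) := by
  have hb0 : b ≠ 0 := by rintro rfl; simp at hb
  have hg := integrable_cexp_neg_mul_sq_add_I_mul hb t
  have hvg := integrable_mul_cexp_neg_mul_sq_add_I_mul hb t
  have hderiv (v : ℝ) : HasDerivAt (fun v : ℝ => cexp (-b * v ^ 2 + I * t * v))
      (I * t * cexp (-b * v ^ 2 + I * t * v) - 2 * b * (v * cexp (-b * v ^ 2 + I * t * v))) v :=
    (((hasDerivAt_pow 2 (v : ℂ)).const_mul (-b)).add
      ((hasDerivAt_id (v : ℂ)).const_mul (I * t))).cexp.comp_ofReal.congr_deriv (by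
        simp only [id_eq, Pi.add_apply, Nat.cast_ofNat, Nat.add_one_sub_one, pow_one, mul_one]
        ring)
  have hzero := integral_eq_zero_of_hasDerivAt_of_integrable hderiv
    ((hg.const_mul _).sub (hvg.const_mul _)) hg
  rw [integral_sub (hg.const_mul _) (hvg.const_mul _), integral_const_mul, integral_const_mul,
    sub_eq_zero] at hzero
  rw [div_mul_eq_mul_div, hzero, mul_div_cancel_left₀ _ (mul_ne_zero two_ne_zero hb0)]

lemma integral_cexp_neg_mul_sq_add_I_mul :
    ∫ v : ℝ, cexp (-b * v ^ 2 + I * t * v) = (π / b) ^ (1 / 2 : ℂ) * cexp (-t ^ 2 / (4 * b)) := by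
  simpa only [← Complex.exp_add, add_comm] using fourierIntegral_gaussian hb t

lemma integral_cexp_neg_mul_sq_add_I_mul_mul_one_add (a : ℂ) :
    ∫ v : ℝ, cexp (-b * v ^ 2 + I * t * v) * (1 + a * v) =
      (π / b) ^ (1 / 2 : ℂ) * cexp (-t ^ 2 / (4 * b)) * (1 + a * (I * t / (2 * b))) := by
  have hg := integrable_cexp_neg_mul_sq_add_I_mul hb t
  have hsplit (v : ℝ) : cexp (-b * v ^ 2 + I * t * v) * (1 + a * v) =
      cexp (-b * v ^ 2 + I * t * v) + a * (v * cexp (-b * v ^ 2 + I * t * v)) := by ring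
  simp_rw [hsplit]
  rw [integral_add hg ((integrable_mul_cexp_neg_mul_sq_add_I_mul hb t).const_mul a),
    integral_const_mul, integral_mul_cexp_neg_mul_sq_add_I_mul hb,
    integral_cexp_neg_mul_sq_add_I_mul hb]
  ring

end GaussianMoments

/-- Explicit computation of the FBI transform of the constant function `1` in
dimension one: writing `⟨ξ⟩ = √(1+ξ²)`,
`∫ e^{i(x-y)ξ - ⟨ξ⟩(x-y)²}(1 + i(x-y)ξ/⟨ξ⟩) dy
  = √π e^{-ξ²/(4⟨ξ⟩)} (⟨ξ⟩^{-1/2} - ξ²/(2⟨ξ⟩^{5/2}))`,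
which is independent of `x`. -/
theorem stmt6 (x ξ : ℝ) :
    ∫ y : ℝ, Complex.exp (Complex.I * (x - y) * ξ -
        (Real.sqrt (1 + ξ ^ 2) : ℂ) * ((x : ℂ) - y) ^ 2) *
        (1 + Complex.I * ((x : ℂ) - y) * ξ / (Real.sqrt (1 + ξ ^ 2) : ℂ)) =
      (Real.sqrt Real.pi : ℂ) *
        Complex.exp (-(ξ ^ 2 : ℂ) / (4 * (Real.sqrt (1 + ξ ^ 2) : ℂ))) *
        (((Real.sqrt (1 + ξ ^ 2) ^ (-(1 / 2 : ℝ)) : ℝ) : ℂ) -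
          (ξ ^ 2 : ℂ) / (2 * ((Real.sqrt (1 + ξ ^ 2) ^ ((5 : ℝ) / 2) : ℝ) : ℂ))) := by
  set s := √(1 + ξ ^ 2)
  have hs : 0 < s := Real.sqrt_pos.mpr (by positivity)
  have hroot : ((π : ℂ) / s) ^ (1 / 2 : ℂ) = √π * (s ^ (-(1 / 2 : ℝ)) : ℝ) := by
    rw [← ofReal_div, ← ofReal_one, ← ofReal_ofNat, ← ofReal_div,
      ← ofReal_cpow (by positivity), ← Real.sqrt_eq_rpow, Real.sqrt_div' _ hs.le,
      Real.rpow_neg hs.le, ← Real.sqrt_eq_rpow, div_eq_mul_inv, ofReal_mul]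
  have hpow : s ^ ((5 : ℝ) / 2) = s ^ 2 / s ^ (-(1 / 2 : ℝ)) := by
    rw [← Real.rpow_natCast, ← Real.rpow_sub hs]
    norm_num
  have hfactor : (((s ^ (-(1 / 2 : ℝ)) : ℝ) : ℂ) - ξ ^ 2 / (2 * ((s ^ ((5 : ℝ) / 2) : ℝ) : ℂ))) =
      ((s ^ (-(1 / 2 : ℝ)) : ℝ) : ℂ) * (1 + I * ξ / s * (I * ξ / (2 * s))) := by
    have : ((s ^ (-(1 / 2 : ℝ)) : ℝ) : ℂ) ≠ 0 := by exact_mod_cast (Real.rpow_pos_of_pos hs _).ne'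
    rw [hpow, ofReal_div]
    field_simp
    rw [I_sq]
    push_cast
    ring
  trans ∫ y : ℝ, cexp (-s * y ^ 2 + I * ξ * y) * (1 + I * ξ / s * y)
  · rw [← integral_sub_left_eq_self _ volume x]
    congr 1; ext y
    push_cast
    ring_nf
  rw [integral_cexp_neg_mul_sq_add_I_mul_mul_one_add (by simpa using hs), hroot, hfactor]
  ring
end

section
/- For an integer m ≥ 0 define J_m(r) = (1/2π) ∫₀^{2π} e^{i r sin θ} e^{-i m θ} dθ and f_m(r) = J_m(r)/r^m for r > 0. Define real numbers a_{j,k} and b_{j,k} for integers 0 ≤ j ≤ k by: a_{0,0} = 1; for all k ≥ 0, b_{k,k} = a_{k,k} and b_{j,k} = 2(j+1) a_{j+1,k} + a_{j,k} for 0 ≤ j ≤ k-1; and for all k ≥ 1, a_{0,k} = b_{0,k-1}, a_{j,k} = (2j+1) b_{j,k-1} + b_{j-1,k-1} for 1 ≤ j ≤ k-1, and a_{k,k} = b_{k-1,k-1}. Then a_{k,k} = b_{k,k} = 1 for all k, all the a_{j,k} and b_{j,k} are positive, and for every integer m ≥ 0, every integer k ≥ 0 and every r > 0: f_m^{(2k)}(r)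 = Σ_{j=0}^{k} (-1)^{j+k} a_{j,k} r^{2j} f_{m+k+j}(r) and f_m^{(2k+1)}(r) = Σ_{j=0}^{k} (-1)^{j+k+1} b_{j,k} r^{2j+1} f_{m+k+j+1}(r). -/
open MeasureTheory Complex Real

/-- The Bessel function of the first kind of integer order `m`, defined by
`J_m(r) = (1/2π) ∫₀^{2π} e^{i r sin θ} e^{-i m θ} dθ`. -/
noncomputable def besselJ (m : ℕ) (r : ℝ) : ℂ :=
  (1 / (2 * Real.pi)) *
    ∫ θ in (0 : ℝ)..(2 * Real.pi),
      Complex.exp (Complex.I * r * Real.sin θ) * Complex.exp (-(Complex.I * m * θ))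

/-- The function `f_m(r) = J_m(r) / r^m`. -/
noncomputable def fBessel (m : ℕ) (r : ℝ) : ℂ :=
  besselJ m r / (r : ℂ) ^ m

/-! Differentiating under the integral sign and integrating by parts in `θ` (the integrand is
`2π`-periodic in `θ`) gives `r J_m' = m J_m - r J_{m+1}`, that is `f_m' = -r f_{m+1}`. Hence
`(r^e f_p)' = e r^{e-1} f_p - r^{e+1} f_{p+1}`: differentiating the expansion of `f_m^{(2k)}`
term by term and collecting equal powers of `r` gives that of `f_m^{(2k+1)}` with the
coefficients `b_{·,k}`, and likewise from odd to even order with `a_{·,k+1}`. Diagonal values and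
positivity follow from the recursion by induction on `k`. -/

open intervalIntegral Finset

noncomputable def besselIntegrand (m : ℕ) (r θ : ℝ) : ℂ :=
  exp (I * r * Real.sin θ) * exp (-(I * m * θ))

lemma besselJ_eq_integral (m : ℕ) (r : ℝ) :
    besselJ m r = 1 / (2 * π) * ∫ θ in (0 : ℝ)..2 * π, besselIntegrand m r θ :=
  rfl

@[fun_prop]
lemma continuous_besselIntegrand (m : ℕ) (r : ℝ) : Continuous (besselIntegrand m r) := by
  unfold besselIntegrand
  fun_prop

lemma norm_besselIntegrand (m : ℕ) (r θ : ℝ) : ‖besselIntegrand m r θ‖ = 1 := by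
  simp [besselIntegrand, norm_exp]

lemma hasDerivAt_besselIntegrand_radius (m : ℕ) (r θ : ℝ) :
    HasDerivAt (fun s => besselIntegrand m s θ) (I * Real.sin θ * besselIntegrand m r θ) r := by
  have h : HasDerivAt (fun z : ℂ => I * z * Real.sin θ) (I * Real.sin θ) r := by
    simpa using ((hasDerivAt_id (r : ℂ)).const_mul I).mul_const (Real.sin θ : ℂ)
  exact (h.cexp.mul_const _).comp_ofReal.congr_deriv (by unfold besselIntegrand; ring)

lemma hasDerivAt_besselIntegrand_angle (m : ℕ) (r θ : ℝ) :
    HasDerivAt (besselIntegrand m r)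
      ((I * r * Real.cos θ - I * m) * besselIntegrand m r θ) θ := by
  have hsin : HasDerivAt (fun t : ℝ => I * r * (Real.sin t : ℂ)) (I * r * Real.cos θ) θ :=
    (Real.hasDerivAt_sin θ).ofReal_comp.const_mul _
  have hlin : HasDerivAt (fun t : ℝ => -(I * m * (t : ℂ))) (-(I * m)) θ := by
    simpa [Pi.neg_def] using ((hasDerivAt_id θ).ofReal_comp.const_mul (I * m)).neg
  exact (hsin.cexp.mul hlin.cexp).congr_deriv (by unfold besselIntegrand; ring)

lemma besselIntegrand_two_pi (m : ℕ) (r : ℝ) :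
    besselIntegrand m r (2 * π) = besselIntegrand m r 0 := by
  have h : -(I * m * ((2 * π : ℝ) : ℂ)) = ((-m : ℤ) : ℂ) * (2 * π * I) := by
    push_cast
    ring
  simp only [besselIntegrand, h, exp_int_mul_two_pi_mul_I, Real.sin_two_pi, Real.sin_zero]
  simp

lemma besselIntegrand_succ (m : ℕ) (r θ : ℝ) :
    besselIntegrand (m + 1) r θ = besselIntegrand m r θ * (Real.cos θ - I * Real.sin θ) := by
  have h : -(I * (m + 1 : ℕ) * θ) = -(I * m * θ) + (-θ : ℝ) * I := by
    push_cast
    ring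
  rw [besselIntegrand, h, Complex.exp_add, exp_mul_I, ← ofReal_cos, ← ofReal_sin, Real.cos_neg,
    Real.sin_neg, besselIntegrand]
  push_cast
  ring

lemma mul_integral_sin_mul_besselIntegrand (m : ℕ) (r : ℝ) :
    r * ∫ θ in (0 : ℝ)..2 * π, I * Real.sin θ * besselIntegrand m r θ =
      m * (∫ θ in (0 : ℝ)..2 * π, besselIntegrand m r θ) -
        r * ∫ θ in (0 : ℝ)..2 * π, besselIntegrand (m + 1) r θ := by
  have hpt : ∀ θ : ℝ, r * (I * Real.sin θ * besselIntegrand m r θ) =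
      m * besselIntegrand m r θ - r * besselIntegrand (m + 1) r θ -
        I * ((I * r * Real.cos θ - I * m) * besselIntegrand m r θ) := by
    intro θ
    rw [besselIntegrand_succ]
    linear_combination (r * Real.cos θ - m) * besselIntegrand m r θ * I_sq
  have hperiodic : ∫ θ in (0 : ℝ)..2 * π,
      (I * r * Real.cos θ - I * m) * besselIntegrand m r θ = 0 := by
    rw [integral_eq_sub_of_hasDerivAt (fun θ _ => hasDerivAt_besselIntegrand_angle m r θ)
      (by apply Continuous.intervalIntegrable; fun_prop), besselIntegrand_two_pi, sub_self]
  simp only [← intervalIntegral.integral_const_mul]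
  simp_rw [hpt]
  rw [intervalIntegral.integral_sub, intervalIntegral.integral_sub,
      intervalIntegral.integral_const_mul I, hperiodic, mul_zero, sub_zero] <;>
    apply Continuous.intervalIntegrable <;> fun_prop

lemma hasDerivAt_besselJ (m : ℕ) {r : ℝ} (hr : r ≠ 0) :
    HasDerivAt (besselJ m) (m / r * besselJ m r - besselJ (m + 1) r) r := by
  have hint := hasDerivAt_integral_of_dominated_loc_of_deriv_le (μ := volume) (a := 0)
    (b := 2 * π) (x₀ := r) (bound := fun _ => 1) (s := Set.univ)
    (F := fun s θ => besselIntegrand m s θ)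
    (F' := fun s θ => I * Real.sin θ * besselIntegrand m s θ) Filter.univ_mem
    (.of_forall fun s => (continuous_besselIntegrand m s).aestronglyMeasurable)
    ((continuous_besselIntegrand m r).intervalIntegrable _ _)
    (by apply Continuous.aestronglyMeasurable; fun_prop)
    (.of_forall fun θ _ s _ => by
      simpa [norm_besselIntegrand, ← ofReal_sin] using abs_sin_le_one θ)
    intervalIntegrable_const
    (.of_forall fun θ _ s _ => hasDerivAt_besselIntegrand_radius m s θ)
  refine (hint.2.const_mul (1 / (2 * π) : ℂ)).congr_deriv ?_
  have hrc : (r : ℂ) ≠ 0 := ofReal_ne_zero.mpr hr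
  rw [besselJ_eq_integral, besselJ_eq_integral]
  field_simp
  linear_combination mul_integral_sin_mul_besselIntegrand m r

lemma hasDerivAt_fBessel (m : ℕ) {r : ℝ} (hr : r ≠ 0) :
    HasDerivAt (fBessel m) (-r * fBessel (m + 1) r) r := by
  have hrc : (r : ℂ) ≠ 0 := ofReal_ne_zero.mpr hr
  have hpow : HasDerivAt (fun s : ℝ => (s : ℂ) ^ m) (m * r ^ (m - 1)) r :=
    (hasDerivAt_pow m (r : ℂ)).comp_ofReal
  refine ((hasDerivAt_besselJ m hr).div hpow (pow_ne_zero m hrc)).congr_deriv ?_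
  have hm : (m : ℂ) * (r : ℂ) ^ (m - 1) = m * r ^ m / r := by
    rw [eq_div_iff hrc]
    cases m <;> simp [pow_succ, mul_assoc]
  unfold fBessel
  rw [hm]
  field_simp
  ring

lemma hasDerivAt_const_mul_pow_mul_fBessel (c : ℂ) (e p : ℕ) {r : ℝ} (hr : r ≠ 0) :
    HasDerivAt (fun s : ℝ => c * (s : ℂ) ^ e * fBessel p s)
      (c * e * (r : ℂ) ^ (e - 1) * fBessel p r - c * (r : ℂ) ^ (e + 1) * fBessel (p + 1) r) r := by
  have hpow : HasDerivAt (fun s : ℝ => c * (s : ℂ) ^ e) (c * (e * (r : ℂ) ^ (e - 1))) r :=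
    ((hasDerivAt_pow e (r : ℂ)).comp_ofReal).const_mul c
  exact (hpow.mul (hasDerivAt_fBessel p hr)).congr_deriv (by ring)

section ShiftedSum

variable {M : Type*} [AddCommGroup M] {f g R : ℕ → M} {k : ℕ}

lemma Finset.sum_range_succ_sub_shift (f g : ℕ → M) (k : ℕ) :
    ∑ j ∈ range (k + 1), (f j - g j) = f 0 + ∑ j ∈ range k, (f (j + 1) - g j) - g k := by
  rw [sum_sub_distrib, sum_sub_distrib, sum_range_succ' f, sum_range_succ g]
  abel

lemma Finset.sum_range_succ_sub_eq_of_shift (h0 : f 0 = 0)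
    (hmid : ∀ j < k, f (j + 1) - g j = R j) (hlast : -g k = R k) :
    ∑ j ∈ range (k + 1), (f j - g j) = ∑ j ∈ range (k + 1), R j := by
  rw [sum_range_succ_sub_shift, sum_range_succ, h0, ← hlast,
    sum_congr rfl fun j hj => hmid j (mem_range.mp hj)]
  abel

lemma Finset.sum_range_succ_sub_eq_of_shift_succ (h0 : f 0 = R 0)
    (hmid : ∀ j < k, f (j + 1) - g j = R (j + 1)) (hlast : -g k = R (k + 1)) :
    ∑ j ∈ range (k + 1), (f j - g j) = ∑ j ∈ range (k + 2), R j := by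
  rw [sum_range_succ_sub_shift, sum_range_succ, sum_range_succ', h0, ← hlast,
    sum_congr rfl fun j hj => hmid j (mem_range.mp hj)]
  abel

end ShiftedSum

lemma eqOn_iterate_deriv_succ {𝕜 E : Type*} [NontriviallyNormedField 𝕜]
    [NormedAddCommGroup E] [NormedSpace 𝕜 E] {f F G : 𝕜 → E} {s : Set 𝕜} {n : ℕ}
    (hs : IsOpen s) (hF : Set.EqOn (deriv^[n] f) F s) (hG : ∀ x ∈ s, HasDerivAt F (G x) x) :
    Set.EqOn (deriv^[n + 1] f) G s := fun x hx => by
  rw [Function.iterate_succ_apply', (hF.eventuallyEq_of_mem (hs.mem_nhds hx)).deriv_eq,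
    (hG x hx).deriv]

structure IsBesselDerivCoeffs (a b : ℕ → ℕ → ℝ) : Prop where
  a_zero_zero : a 0 0 = 1
  b_self : ∀ k : ℕ, b k k = a k k
  b_of_lt : ∀ j k : ℕ, j < k → b j k = 2 * (j + 1) * a (j + 1) k + a j k
  a_zero_succ : ∀ k : ℕ, a 0 (k + 1) = b 0 k
  a_succ_of_le : ∀ j k : ℕ, 1 ≤ j → j ≤ k → a j (k + 1) = (2 * j + 1) * b j k + b (j - 1) k
  a_succ_self : ∀ k : ℕ, a (k + 1) (k + 1) = b k k

namespace IsBesselDerivCoeffs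

variable {a b : ℕ → ℕ → ℝ}

theorem a_self_eq_one (h : IsBesselDerivCoeffs a b) (k : ℕ) : a k k = 1 := by
  induction k with
  | zero => exact h.a_zero_zero
  | succ k ih => rw [h.a_succ_self, h.b_self, ih]

theorem b_self_eq_one (h : IsBesselDerivCoeffs a b) (k : ℕ) : b k k = 1 :=
  (h.b_self k).trans (h.a_self_eq_one k)

theorem b_pos (h : IsBesselDerivCoeffs a b) {k : ℕ} (ha : ∀ j ≤ k, 0 < a j k) :
    ∀ j ≤ k, 0 < b j k := by
  intro j hj
  rcases hj.lt_or_eq with hj | rfl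
  · rw [h.b_of_lt j k hj]
    have := ha (j + 1) hj
    have := ha j hj.le
    positivity
  · rw [h.b_self]
    exact ha j le_rfl

theorem a_succ_pos (h : IsBesselDerivCoeffs a b) {k : ℕ} (hb : ∀ j ≤ k, 0 < b j k) :
    ∀ j ≤ k + 1, 0 < a j (k + 1) := by
  intro j hj
  rcases hj.lt_or_eq with hj | rfl
  · rcases j.eq_zero_or_pos with rfl | hj0
    · rw [h.a_zero_succ]
      exact hb 0 k.zero_le
    · rw [h.a_succ_of_le j k hj0 (Nat.lt_succ_iff.mp hj)]
      have := hb j (Nat.lt_succ_iff.mp hj)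
      have := hb (j - 1) (by omega)
      positivity
  · rw [h.a_succ_self]
    exact hb k le_rfl

theorem pos (h : IsBesselDerivCoeffs a b) (k : ℕ) : ∀ j ≤ k, 0 < a j k ∧ 0 < b j k := by
  suffices ha : ∀ j ≤ k, 0 < a j k from fun j hj => ⟨ha j hj, h.b_pos ha j hj⟩
  induction k with
  | zero =>
    intro j hj
    rw [Nat.le_zero.mp hj, h.a_zero_zero]
    exact one_pos
  | succ k ih => exact h.a_succ_pos (h.b_pos ih)

end IsBesselDerivCoeffs

noncomputable def fBesselEvenSum (a : ℕ → ℕ → ℝ) (m k : ℕ) (r : ℝ) : ℂ :=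
  ∑ j ∈ range (k + 1), (-1 : ℂ) ^ (j + k) * (a j k : ℂ) * (r : ℂ) ^ (2 * j) * fBessel (m + k + j) r

noncomputable def fBesselOddSum (b : ℕ → ℕ → ℝ) (m k : ℕ) (r : ℝ) : ℂ :=
  ∑ j ∈ range (k + 1),
    (-1 : ℂ) ^ (j + k + 1) * (b j k : ℂ) * (r : ℂ) ^ (2 * j + 1) * fBessel (m + k + j + 1) r

section Expansions

variable {a b : ℕ → ℕ → ℝ}

theorem hasDerivAt_fBesselEvenSum (h : IsBesselDerivCoeffs a b) (m k : ℕ)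
    {r : ℝ} (hr : r ≠ 0) : HasDerivAt (fBesselEvenSum a m k) (fBesselOddSum b m k r) r := by
  refine (HasDerivAt.fun_sum fun j _ => hasDerivAt_const_mul_pow_mul_fBessel
    ((-1) ^ (j + k) * a j k) (2 * j) (m + k + j) hr).congr_deriv ?_
  refine sum_range_succ_sub_eq_of_shift (by simp) (fun j hj => ?_) ?_
  · have hb : (b j k : ℂ) = 2 * (j + 1) * a (j + 1) k + a j k := by
      exact_mod_cast h.b_of_lt j k hj
    rw [show 2 * (j + 1) - 1 = 2 * j + 1 by omega, show m + k + (j + 1) = m + k + j + 1 by omega]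
    push_cast
    linear_combination (-1 : ℂ) ^ (j + k) * (r : ℂ) ^ (2 * j + 1) * fBessel (m + k + j + 1) r * hb
  · have hb : (b k k : ℂ) = a k k := by exact_mod_cast h.b_self k
    linear_combination (-1 : ℂ) ^ (k + k) * (r : ℂ) ^ (2 * k + 1) * fBessel (m + k + k + 1) r * hb

theorem hasDerivAt_fBesselOddSum (h : IsBesselDerivCoeffs a b) (m k : ℕ)
    {r : ℝ} (hr : r ≠ 0) : HasDerivAt (fBesselOddSum b m k) (fBesselEvenSum a m (k + 1) r) r := by
  refine (HasDerivAt.fun_sum fun j _ => hasDerivAt_const_mul_pow_mul_fBessel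
    ((-1) ^ (j + k + 1) * b j k) (2 * j + 1) (m + k + j + 1) hr).congr_deriv ?_
  refine sum_range_succ_sub_eq_of_shift_succ ?_ (fun j hj => ?_) ?_
  · have ha : (a 0 (k + 1) : ℂ) = b 0 k := by exact_mod_cast h.a_zero_succ k
    rw [show m + k + 0 + 1 = m + (k + 1) + 0 by omega]
    push_cast
    linear_combination (-1 : ℂ) ^ (k + 1) * fBessel (m + (k + 1) + 0) r * ha.symm
  · have ha : (a (j + 1) (k + 1) : ℂ) = (2 * (j + 1) + 1) * b (j + 1) k + b j k := by
      exact_mod_cast h.a_succ_of_le (j + 1) k (by omega) (by omega)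
    rw [show 2 * (j + 1) + 1 - 1 = 2 * (j + 1) by omega,
      show m + k + (j + 1) + 1 = m + (k + 1) + (j + 1) by omega,
      show m + k + j + 1 + 1 = m + (k + 1) + (j + 1) by omega]
    push_cast
    linear_combination (-1 : ℂ) ^ (j + k) * (r : ℂ) ^ (2 * j + 2) *
      fBessel (m + (k + 1) + (j + 1)) r * ha.symm
  · have ha : (a (k + 1) (k + 1) : ℂ) = b k k := by exact_mod_cast h.a_succ_self k
    rw [show m + k + k + 1 + 1 = m + (k + 1) + (k + 1) by omega]
    linear_combination (-1 : ℂ) ^ (k + 1 + (k + 1)) * (r : ℂ) ^ (2 * (k + 1)) *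
      fBessel (m + (k + 1) + (k + 1)) r * ha.symm

theorem eqOn_iterate_deriv_two_mul_fBessel (h : IsBesselDerivCoeffs a b) (m k : ℕ) :
    Set.EqOn (deriv^[2 * k] (fBessel m)) (fBesselEvenSum a m k) {0}ᶜ := by
  induction k with
  | zero =>
    intro r _
    simp [fBesselEvenSum, h.a_zero_zero]
  | succ k ih =>
    have hodd := eqOn_iterate_deriv_succ isOpen_compl_singleton ih
      fun r hr => hasDerivAt_fBesselEvenSum h m k hr
    exact eqOn_iterate_deriv_succ isOpen_compl_singleton hodd
      fun r hr => hasDerivAt_fBesselOddSum h m k hr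

theorem eqOn_iterate_deriv_two_mul_add_one_fBessel (h : IsBesselDerivCoeffs a b) (m k : ℕ) :
    Set.EqOn (deriv^[2 * k + 1] (fBessel m)) (fBesselOddSum b m k) {0}ᶜ :=
  eqOn_iterate_deriv_succ isOpen_compl_singleton (eqOn_iterate_deriv_two_mul_fBessel h m k)
    fun _ hr => hasDerivAt_fBesselEvenSum h m k hr

end Expansions

/-- The combinatorial lemma for higher derivatives of `f_m(r) = J_m(r)/r^m`:
with the coefficients `a_{j,k}`, `b_{j,k}` defined by the stated recursion, all diagonal
coefficients equal `1`, all coefficients are positive, and the even/odd order derivatives of `f_m`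
are the stated linear combinations of the functions `r^{2j} f_{m+k+j}(r)`. -/
theorem stmt9 (a b : ℕ → ℕ → ℝ)
    (ha00 : a 0 0 = 1)
    (hbkk : ∀ k : ℕ, b k k = a k k)
    (hbjk : ∀ j k : ℕ, j < k → b j k = 2 * (j + 1) * a (j + 1) k + a j k)
    (ha0k : ∀ k : ℕ, a 0 (k + 1) = b 0 k)
    (hajk : ∀ j k : ℕ, 1 ≤ j → j ≤ k → a j (k + 1) = (2 * j + 1) * b j k + b (j - 1) k)
    (hakk : ∀ k : ℕ, a (k + 1) (k + 1) = b k k) :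
    (∀ k : ℕ, a k k = 1 ∧ b k k = 1) ∧
    (∀ j k : ℕ, j ≤ k → 0 < a j k ∧ 0 < b j k) ∧
    (∀ (m k : ℕ) (r : ℝ), 0 < r →
      deriv^[2 * k] (fBessel m) r =
        ∑ j ∈ Finset.range (k + 1),
          (-1 : ℂ) ^ (j + k) * (a j k : ℂ) * (r : ℂ) ^ (2 * j) * fBessel (m + k + j) r) ∧
    (∀ (m k : ℕ) (r : ℝ), 0 < r →
      deriv^[2 * k + 1] (fBessel m) r =
        ∑ j ∈ Finset.range (k + 1),
          (-1 : ℂ) ^ (j + k + 1) * (b j k : ℂ) * (r : ℂ) ^ (2 * j + 1) *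
            fBessel (m + k + j + 1) r) := by
  have h : IsBesselDerivCoeffs a b := ⟨ha00, hbkk, hbjk, ha0k, hajk, hakk⟩
  exact ⟨fun k => ⟨h.a_self_eq_one k, h.b_self_eq_one k⟩,
    fun j k hj => h.pos k j hj,
    fun m k r hr => eqOn_iterate_deriv_two_mul_fBessel h m k hr.ne',
    fun m k r hr => eqOn_iterate_deriv_two_mul_add_one_fBessel h m k hr.ne'⟩
end

section
/- Define real numbers a_{j,k} and b_{j,k} for integers 0 ≤ j ≤ k by: a_{0,0} = 1; for all k ≥ 0, b_{k,k} = a_{k,k} and b_{j,k} = 2(j+1) a_{j+1,k} + a_{j,k} for 0 ≤ j ≤ k-1; and for all k ≥ 1, a_{0,k} = b_{0,k-1}, a_{j,k} = (2j+1) b_{j,k-1} + b_{j-1,k-1} for 1 ≤ j ≤ k-1, and a_{k,k} = b_{k-1,k-1}. Then there exist constants C, A > 0 such that for all integers 0 ≤ j ≤ k, a_{j,k} ≤ C A^k k! and b_{j,k} ≤ C A^k k!. -/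
/-- The coefficients `a_{j,k}`, `b_{j,k}` from the derivative recursion for
`f_m(r) = J_m(r)/r^m` grow at most like `C A^k k!`. -/
theorem stmt10 (a b : ℕ → ℕ → ℝ)
    (ha00 : a 0 0 = 1)
    (hbkk : ∀ k : ℕ, b k k = a k k)
    (hbjk : ∀ j k : ℕ, j < k → b j k = 2 * (j + 1) * a (j + 1) k + a j k)
    (ha0k : ∀ k : ℕ, a 0 (k + 1) = b 0 k)
    (hajk : ∀ j k : ℕ, 1 ≤ j → j ≤ k → a j (k + 1) = (2 * j + 1) * b j k + b (j - 1) k)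
    (hakk : ∀ k : ℕ, a (k + 1) (k + 1) = b k k) :
    ∃ C > (0 : ℝ), ∃ A > (0 : ℝ), ∀ j k : ℕ, j ≤ k →
      a j k ≤ C * A ^ k * Nat.factorial k ∧ b j k ≤ C * A ^ k * Nat.factorial k := by
  set g : ℕ → ℝ := fun j => 2 ^ j * (Nat.factorial j : ℝ) with hg
  have hgpos : ∀ j, (0 : ℝ) < g j := by
    intro j
    have := Nat.factorial_pos j
    positivity
  have hgone : ∀ j, (1 : ℝ) ≤ g j := by
    intro j
    have h1 : (1 : ℝ) ≤ 2 ^ j := one_le_pow₀ (by norm_num)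
    have h2 : (1 : ℝ) ≤ (Nat.factorial j : ℝ) := by
      exact_mod_cast Nat.one_le_iff_ne_zero.mpr (Nat.factorial_pos j).ne'
    calc (1 : ℝ) = 1 * 1 := by ring
    _ ≤ 2 ^ j * (Nat.factorial j : ℝ) := by
        exact mul_le_mul h1 h2 (by norm_num) (by positivity)
  have hgsucc : ∀ j : ℕ, g (j + 1) = 2 * (j + 1) * g j := by
    intro j
    simp only [hg, Nat.factorial_succ, pow_succ]
    push_cast
    ring
  have hBpos : ∀ k : ℕ, (0 : ℝ) < 8 ^ k * (Nat.factorial k : ℝ) := by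
    intro k
    have := Nat.factorial_pos k
    positivity
  -- step: a-bound at level k implies b-bound at level k
  have stepB : ∀ k : ℕ,
      (∀ j ≤ k, a j k * g j ≤ 8 ^ k * (Nat.factorial k : ℝ)) →
      (∀ j ≤ k, b j k * g j ≤ 2 * (8 ^ k * (Nat.factorial k : ℝ))) := by
    intro k hA j hj
    rcases lt_or_eq_of_le hj with hlt | rfl
    · have h1 := hA j hj
      have h2 := hA (j + 1) hlt
      have hb := hbjk j k hlt
      have key : b j k * g j = a (j + 1) k * g (j + 1) + a j k * g j := by
        rw [hb, hgsucc]
        ring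
      rw [key]
      linarith
    · have h1 := hA j le_rfl
      rw [hbkk, ]
      have := hBpos j
      linarith
  -- step: b-bound at level k implies a-bound at level k+1
  have stepA : ∀ k : ℕ,
      (∀ j ≤ k, b j k * g j ≤ 2 * (8 ^ k * (Nat.factorial k : ℝ))) →
      (∀ j ≤ k + 1, a j (k + 1) * g j ≤ 8 ^ (k + 1) * (Nat.factorial (k + 1) : ℝ)) := by
    intro k hB j hj
    have hBk := hBpos k
    have hfact : (8 : ℝ) ^ (k + 1) * (Nat.factorial (k + 1) : ℝ)
        = 8 * (k + 1) * (8 ^ k * (Nat.factorial k : ℝ)) := by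
      rw [Nat.factorial_succ]
      push_cast
      ring
    match j, hj with
    | 0, _ =>
      have h0 := hB 0 (Nat.zero_le k)
      rw [ha0k, hfact]
      nlinarith [(Nat.cast_nonneg k : (0:ℝ) ≤ k)]
    | (i + 1), hj =>
      rcases Nat.lt_succ_iff_lt_or_eq.mp hj with hik | heq
      · -- 1 ≤ i+1 ≤ k
        have hik' : i + 1 ≤ k := hik
        have h1 := hB (i + 1) hik'
        have h2 := hB i (le_trans (Nat.le_succ i) hik')
        have ha := hajk (i + 1) k (Nat.one_le_iff_ne_zero.mpr (Nat.succ_ne_zero i)) hik'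
        simp only [Nat.add_sub_cancel] at ha
        have key : a (i + 1) (k + 1) * g (i + 1)
            = (2 * (i + 1) + 1) * (b (i + 1) k * g (i + 1)) + 2 * (i + 1) * (b i k * g i) := by
          rw [ha, hgsucc]
          push_cast
          ring
        rw [key, hfact]
        have hgi1 := hgpos (i + 1)
        have h1' : (2 * (i + 1 : ℝ) + 1) * (b (i + 1) k * g (i + 1))
            ≤ (2 * (i + 1 : ℝ) + 1) * (2 * (8 ^ k * (Nat.factorial k : ℝ))) := by
          apply mul_le_mul_of_nonneg_left h1
          positivity
        have h2' : (2 * (i + 1 : ℝ)) * (b i k * g i)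
            ≤ (2 * (i + 1 : ℝ)) * (2 * (8 ^ k * (Nat.factorial k : ℝ))) := by
          apply mul_le_mul_of_nonneg_left h2
          positivity
        have hik'' : (i : ℝ) + 1 ≤ (k : ℝ) := by exact_mod_cast hik'
        nlinarith
      · -- j = k+1
        subst heq
        have h1 := hB i le_rfl
        have key : a (i + 1) (i + 1) * g (i + 1) = 2 * (i + 1) * (b i i * g i) := by
          rw [hakk, hgsucc]
          ring
        rw [key, hfact]
        have h2' : (2 * (i + 1 : ℝ)) * (b i i * g i)
            ≤ (2 * (i + 1 : ℝ)) * (2 * (8 ^ i * (Nat.factorial i : ℝ))) := by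
          apply mul_le_mul_of_nonneg_left h1
          positivity
        have hBi := hBpos i
        nlinarith [(Nat.cast_nonneg i : (0:ℝ) ≤ i)]
  have key : ∀ k : ℕ, ∀ j ≤ k, a j k * g j ≤ 8 ^ k * (Nat.factorial k : ℝ) ∧
      b j k * g j ≤ 2 * (8 ^ k * (Nat.factorial k : ℝ)) := by
    intro k
    induction k with
    | zero =>
      have hA : ∀ j ≤ 0, a j 0 * g j ≤ 8 ^ 0 * (Nat.factorial 0 : ℝ) := by
        intro j hj
        interval_cases j
        simp [ha00, hg]
      intro j hj
      exact ⟨hA j hj, stepB 0 hA j hj⟩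
    | succ n ih =>
      have hBn : ∀ j ≤ n, b j n * g j ≤ 2 * (8 ^ n * (Nat.factorial n : ℝ)) :=
        fun j hj => (ih j hj).2
      have hA := stepA n hBn
      intro j hj
      exact ⟨hA j hj, stepB (n + 1) hA j hj⟩
  refine ⟨2, by norm_num, 8, by norm_num, fun j k hj => ?_⟩
  obtain ⟨h1, h2⟩ := key k j hj
  have hg1 := hgone j
  have hBk := hBpos k
  constructor
  · rcases le_or_gt (a j k) 0 with h | h
    · nlinarith
    · have : a j k ≤ a j k * g j := le_mul_of_one_le_right h.le hg1
      nlinarith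
  · rcases le_or_gt (b j k) 0 with h | h
    · nlinarith
    · have : b j k ≤ b j k * g j := le_mul_of_one_le_right h.le hg1
      nlinarith
end

section
/- Let d ≥ 2, let σ denote the (d-1)-dimensional Hausdorff measure on the unit sphere S^{d-1} ⊆ ℝ^d, and let e₁ = (1,0,…,0) ∈ S^{d-1}. Then there exists a constant C > 0 such that for every integer k ≥ 0, ∫_{S^{d-1}} (1 + 2^k |e₁ - y|)^{-d} dσ(y) ≤ C 2^{-k(d-1)}. -/
open MeasureTheory Complex Real

/-- The surface area measure of the unit sphere `S^{d-1} ⊆ ℝ^d`, realized as the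
`(d-1)`-dimensional Hausdorff measure restricted to the sphere. -/
noncomputable def sphereMeasure (d : ℕ) : Measure (EuclideanSpace ℝ (Fin d)) :=
  (MeasureTheory.Measure.hausdorffMeasure (d - 1 : ℕ)).restrict
    (Metric.sphere (0 : EuclideanSpace ℝ (Fin d)) 1)

/-- `g_α(ξ) = ∫_{S^{d-1}} x^α e^{-i x·ξ} dσ(x)`, the Fourier transform of the moment measure
`x^α dσ`. -/
noncomputable def momentFT (d : ℕ) (α : Fin d → ℕ) (ξ : EuclideanSpace ℝ (Fin d)) : ℂ :=
  ∫ x, (∏ j, (x j : ℂ) ^ α j) * Complex.exp (-(Complex.I * ((inner ℝ x ξ : ℝ) : ℂ)))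
    ∂(sphereMeasure d)

/-!
Choosing `j` with `2^j ≤ 1 + 2^k |e₁ - y| < 2^(j+1)` dominates the kernel pointwise by
`∑ⱼ 2^(-jd) 1_{|e₁ - y| < 2^(j+1-k)}`, so the cap bound `σ(B(e₁, r)) ≲ r^(d-1)` turns the
integral into the convergent geometric series `2^(-k(d-1)) ∑ⱼ 2^(-j)`.

The cap bound comes from the inverse stereographic projection `f = stereoInvFunAux (-e₁)` on the
hyperplane `e₁ᗮ`. The chordal identity `|f w₁ - f w₂|² (|w₁|² + 4)(|w₂|² + 4) = 16 |w₁ - w₂|²`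
makes it 1-Lipschitz, and a point of the closed hemisphere around `e₁` at distance `ρ` from `e₁`
is `f w` for some `|w| ≤ 2ρ`. A point of the cap beyond the equator is `-f w` instead, since its
antipode is closer to `e₁` than it is.
-/

open Metric Set Module
open scoped ENNReal NNReal InnerProductSpace

section DyadicKernel

theorem two_rpow_neg_pow_mul_div_rpow (j : ℕ) {s p t : ℝ} (ht : 0 < t) :
    ((2 : ℝ) ^ (-p)) ^ j * ((2 : ℝ) ^ (j + 1) / t) ^ s = 2 ^ s * t ^ (-s) * (2 ^ (s - p)) ^ j := by
  have h2 : (0 : ℝ) ≤ 2 := by norm_num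
  rw [div_rpow (by positivity) ht.le, rpow_neg ht.le, ← rpow_mul_natCast h2,
    ← rpow_mul_natCast h2, ← rpow_natCast, ← rpow_mul h2, div_eq_mul_inv]
  have key : (2 : ℝ) ^ (-p * j) * 2 ^ (((j + 1 : ℕ) : ℝ) * s) = 2 ^ s * 2 ^ ((s - p) * j) := by
    rw [← rpow_add two_pos, ← rpow_add two_pos]
    push_cast
    ring_nf
  linear_combination (t ^ s)⁻¹ * key

variable {X : Type*} [PseudoMetricSpace X]

theorem ofReal_one_add_mul_dist_rpow_neg_le_tsum {p t : ℝ} (hp : 0 ≤ p) (ht : 0 < t) (x y : X) :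
    ENNReal.ofReal ((1 + t * dist x y) ^ (-p)) ≤
      ∑' j : ℕ, (ball x (2 ^ (j + 1) / t)).indicator
        (fun _ ↦ ENNReal.ofReal (2 ^ (-p)) ^ j) y := by
  obtain ⟨j, hj, hj'⟩ := exists_nat_pow_near
    (le_add_of_nonneg_right (by positivity : 0 ≤ t * dist x y)) one_lt_two
  have hy : y ∈ ball x (2 ^ (j + 1) / t) := by
    rw [mem_ball, lt_div_iff₀ ht, dist_comm]
    linarith
  refine le_trans ?_ (ENNReal.le_tsum j)
  rw [indicator_of_mem hy, ← ENNReal.ofReal_pow (by positivity), ← rpow_mul_natCast (by norm_num),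
    mul_comm (-p), rpow_natCast_mul (by norm_num)]
  exact ENNReal.ofReal_le_ofReal
    (rpow_le_rpow_of_nonpos (by positivity) hj (neg_nonpos.mpr hp))

variable [MeasurableSpace X] [OpensMeasurableSpace X]

theorem lintegral_one_add_mul_dist_rpow_neg_le {μ : Measure X} {x : X} {A : ℝ≥0∞} {s p t : ℝ}
    (hp : 0 ≤ p) (hμ : ∀ r > 0, μ (ball x r) ≤ A * ENNReal.ofReal (r ^ s)) (ht : 0 < t) :
    ∫⁻ y, ENNReal.ofReal ((1 + t * dist x y) ^ (-p)) ∂μ ≤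
      A * ENNReal.ofReal (2 ^ s) * (1 - ENNReal.ofReal (2 ^ (s - p)))⁻¹ *
        ENNReal.ofReal (t ^ (-s)) := by
  calc ∫⁻ y, ENNReal.ofReal ((1 + t * dist x y) ^ (-p)) ∂μ
      ≤ ∫⁻ y, ∑' j : ℕ, (ball x (2 ^ (j + 1) / t)).indicator
          (fun _ ↦ ENNReal.ofReal (2 ^ (-p)) ^ j) y ∂μ :=
        lintegral_mono (ofReal_one_add_mul_dist_rpow_neg_le_tsum hp ht x)
    _ = ∑' j : ℕ, ENNReal.ofReal (2 ^ (-p)) ^ j * μ (ball x (2 ^ (j + 1) / t)) := by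
        rw [lintegral_tsum fun j ↦ (measurable_const.indicator measurableSet_ball).aemeasurable]
        simp only [lintegral_indicator_const measurableSet_ball]
    _ ≤ ∑' j : ℕ, ENNReal.ofReal (2 ^ (-p)) ^ j * (A * ENNReal.ofReal ((2 ^ (j + 1) / t) ^ s)) :=
        ENNReal.tsum_le_tsum fun j ↦ by gcongr; exact hμ _ (by positivity)
    _ = ∑' j : ℕ, A * ENNReal.ofReal (2 ^ s * t ^ (-s)) * ENNReal.ofReal (2 ^ (s - p)) ^ j := by
        congr 1 with j
        rw [mul_left_comm, ← ENNReal.ofReal_pow (by positivity),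
          ← ENNReal.ofReal_pow (by positivity), ← ENNReal.ofReal_mul (by positivity), two_rpow_neg_pow_mul_div_rpow j ht,
          ENNReal.ofReal_mul (by positivity), mul_assoc]
    _ = A * ENNReal.ofReal (2 ^ s) * (1 - ENNReal.ofReal (2 ^ (s - p)))⁻¹ *
          ENNReal.ofReal (t ^ (-s)) := by
        rw [ENNReal.tsum_mul_left, ENNReal.tsum_geometric, ENNReal.ofReal_mul (by positivity)]
        ring

theorem exists_integral_one_add_mul_dist_rpow_neg_le {μ : Measure X} {x : X} {A : ℝ≥0∞}
    {s p : ℝ} (hA : A ≠ ⊤) (hp : 0 ≤ p) (hsp : s < p)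
    (hμ : ∀ r > 0, μ (ball x r) ≤ A * ENNReal.ofReal (r ^ s)) :
    ∃ C > (0 : ℝ), ∀ t > (0 : ℝ), ∫ y, (1 + t * dist x y) ^ (-p) ∂μ ≤ C * t ^ (-s) := by
  set K := A * ENNReal.ofReal (2 ^ s) * (1 - ENNReal.ofReal (2 ^ (s - p)))⁻¹
  have hρ : ENNReal.ofReal (2 ^ (s - p)) < 1 :=
    ENNReal.ofReal_lt_one.mpr (rpow_lt_one_of_one_lt_of_neg one_lt_two (sub_neg.mpr hsp))
  have hK : K ≠ ⊤ := ENNReal.mul_ne_top (ENNReal.mul_ne_top hA ENNReal.ofReal_ne_top)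
    (ENNReal.inv_ne_top.mpr (tsub_pos_of_lt hρ).ne')
  refine ⟨K.toReal + 1, by positivity, fun t ht ↦ ?_⟩
  have hpos : ∀ y, 0 < 1 + t * dist x y := fun y ↦ by positivity
  have hmeas : Continuous fun y ↦ (1 + t * dist x y) ^ (-p) :=
    (continuous_const.add (continuous_const.mul (continuous_const.dist continuous_id))).rpow_const
      fun y ↦ Or.inl (hpos y).ne'
  have hbound := lintegral_one_add_mul_dist_rpow_neg_le hp hμ ht
  rw [integral_eq_lintegral_of_nonneg_ae (.of_forall fun y ↦ (rpow_pos_of_pos (hpos y) _).le)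
    hmeas.aestronglyMeasurable]
  calc (∫⁻ y, ENNReal.ofReal ((1 + t * dist x y) ^ (-p)) ∂μ).toReal
      ≤ (K * ENNReal.ofReal (t ^ (-s))).toReal :=
        ENNReal.toReal_mono (ENNReal.mul_ne_top hK ENNReal.ofReal_ne_top) hbound
    _ = K.toReal * t ^ (-s) := by rw [ENNReal.toReal_mul, ENNReal.toReal_ofReal (by positivity)]
    _ ≤ (K.toReal + 1) * t ^ (-s) := by gcongr; linarith

end DyadicKernel

theorem hausdorffMeasure_image_closedBall_le {V Y : Type*} [NormedAddCommGroup V]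
    [NormedSpace ℝ V] [FiniteDimensional ℝ V] [MeasurableSpace V] [BorelSpace V] [EMetricSpace Y]
    [MeasurableSpace Y] [BorelSpace Y] {L : ℝ≥0} {f : V → Y} (hf : LipschitzWith L f) (c : V)
    {R : ℝ} (hR : 0 ≤ R) :
    μH[finrank ℝ V] (f '' closedBall c R) ≤
      L ^ (finrank ℝ V : ℝ) * ENNReal.ofReal (R ^ finrank ℝ V) *
        μH[finrank ℝ V] (ball (0 : V) 1) := by
  rw [mul_assoc, ← Measure.addHaar_closedBall _ c hR]
  exact hf.hausdorffMeasure_image_le (Nat.cast_nonneg _) _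

section StereographicCaps

variable {E : Type*} [NormedAddCommGroup E] [InnerProductSpace ℝ E]

theorem norm_stereoInvFunAux_sub_sq_mul {v w₁ w₂ : E} (hv : ‖v‖ = 1) (h₁ : w₁ ∈ (ℝ ∙ v)ᗮ)
    (h₂ : w₂ ∈ (ℝ ∙ v)ᗮ) :
    ‖stereoInvFunAux v w₁ - stereoInvFunAux v w₂‖ ^ 2 * ((‖w₁‖ ^ 2 + 4) * (‖w₂‖ ^ 2 + 4)) =
      16 * ‖w₁ - w₂‖ ^ 2 := by
  have h₁' := Submodule.mem_orthogonal_singleton_iff_inner_left.mp h₁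
  have h₂' := Submodule.mem_orthogonal_singleton_iff_inner_left.mp h₂
  rw [Submodule.mem_orthogonal_singleton_iff_inner_right] at h₁ h₂
  have hv' : ⟪v, v⟫_ℝ = 1 := by simp [hv]
  have ha : (0 : ℝ) < ‖w₁‖ ^ 2 + 4 := by positivity
  have hb : (0 : ℝ) < ‖w₂‖ ^ 2 + 4 := by positivity
  simp only [stereoInvFunAux_apply, ← real_inner_self_eq_norm_sq, inner_sub_left, inner_sub_right,
    inner_add_left, inner_add_right, inner_smul_left, inner_smul_right, h₁, h₂, h₁', h₂', hv',
    RCLike.conj_to_real]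
  rw [real_inner_self_eq_norm_sq, real_inner_self_eq_norm_sq, real_inner_comm w₁ w₂]
  field_simp
  ring

@[simp]
theorem stereoInvFunAux_zero (v : E) : stereoInvFunAux v 0 = -v := by
  simp [stereoInvFunAux_apply]

theorem lipschitzWith_stereoInvFunAux {v : E} (hv : ‖v‖ = 1) :
    LipschitzWith 1 fun w : (ℝ ∙ v)ᗮ ↦ stereoInvFunAux v w := by
  refine LipschitzWith.of_dist_le_mul fun w₁ w₂ ↦ ?_
  rw [NNReal.coe_one, one_mul, dist_eq_norm, dist_eq_norm]
  change _ ≤ ‖(w₁ : E) - w₂‖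
  have key := norm_stereoInvFunAux_sub_sq_mul hv w₁.2 w₂.2
  have h16 : (16 : ℝ) ≤ (‖(w₁ : E)‖ ^ 2 + 4) * (‖(w₂ : E)‖ ^ 2 + 4) := by
    nlinarith [sq_nonneg ‖(w₁ : E)‖, sq_nonneg ‖(w₂ : E)‖]
  refine pow_le_pow_iff_left₀ (norm_nonneg _) (norm_nonneg _) two_ne_zero |>.mp ?_
  nlinarith [sq_nonneg ‖stereoInvFunAux v w₁ - stereoInvFunAux v w₂‖]

theorem exists_stereoInvFunAux_eq {v y : E} (hv : ‖v‖ = 1) (hy : ‖y‖ = 1)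
    (hyv : ‖y + v‖ ^ 2 ≤ 2) : ∃ w ∈ (ℝ ∙ v)ᗮ, stereoInvFunAux v w = y ∧ ‖w‖ ≤ 2 * ‖y + v‖ := by
  have hne : y ≠ v := by
    rintro rfl
    rw [← two_smul ℝ, norm_smul, hy] at hyv
    norm_num at hyv
  have hw := stereo_left_inv hv (x := ⟨y, by simpa using hy⟩) hne
  set w := stereoToFun v y
  have hwy : stereoInvFunAux v w = y := congrArg Subtype.val hw
  refine ⟨w, w.2, hwy, ?_⟩
  have key := norm_stereoInvFunAux_sub_sq_mul hv w.2 (Submodule.zero_mem _)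
  rw [hwy, stereoInvFunAux_zero, sub_neg_eq_add, norm_zero, sub_zero] at key
  nlinarith [norm_nonneg (w : E), norm_nonneg (y + v)]

theorem sphere_inter_ball_neg_subset {v : E} (hv : ‖v‖ = 1) (r : ℝ) :
    sphere (0 : E) 1 ∩ ball (-v) r ⊆
      (fun w : (ℝ ∙ v)ᗮ ↦ stereoInvFunAux v w) '' closedBall 0 (2 * r) ∪
        (fun w : (ℝ ∙ v)ᗮ ↦ -stereoInvFunAux v w) '' closedBall 0 (2 * r) := by
  rintro y ⟨hy, hyr⟩
  rw [mem_sphere_zero_iff_norm] at hy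
  rw [mem_ball, dist_eq_norm, sub_neg_eq_add] at hyr
  have hpar : ‖y + v‖ ^ 2 + ‖-y + v‖ ^ 2 = 4 := by
    rw [norm_add_sq_real, norm_add_sq_real, norm_neg, inner_neg_left, hy, hv]
    ring
  by_cases h : ‖y + v‖ ^ 2 ≤ 2
  · obtain ⟨w, hw, rfl, hwn⟩ := exists_stereoInvFunAux_eq hv hy h
    exact Or.inl ⟨⟨w, hw⟩, mem_closedBall_zero_iff.mpr (by change ‖w‖ ≤ _; linarith), rfl⟩
  · obtain ⟨w, hw, hwy, hwn⟩ :=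
      exists_stereoInvFunAux_eq hv (by rwa [norm_neg]) (by linarith : ‖-y + v‖ ^ 2 ≤ 2)
    have hle : ‖-y + v‖ ≤ ‖y + v‖ :=
      (pow_le_pow_iff_left₀ (norm_nonneg _) (norm_nonneg _) two_ne_zero).mp (by linarith)
    refine Or.inr ⟨⟨w, hw⟩, mem_closedBall_zero_iff.mpr (by change ‖w‖ ≤ _; linarith), ?_⟩
    change -stereoInvFunAux v w = y
    rw [hwy, neg_neg]

theorem exists_hausdorffMeasure_sphere_inter_ball_le [FiniteDimensional ℝ E] [MeasurableSpace E]
    [BorelSpace E] {x : E} (hx : ‖x‖ = 1) :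
    ∃ A : ℝ≥0∞, A ≠ ⊤ ∧ ∀ r > 0, μH[(finrank ℝ E - 1 : ℕ)] (sphere (0 : E) 1 ∩ ball x r) ≤
      A * ENNReal.ofReal (r ^ (finrank ℝ E - 1)) := by
  set n := finrank ℝ E - 1
  have hv : ‖-x‖ = 1 := by rwa [norm_neg]
  have hK : finrank ℝ (ℝ ∙ -x)ᗮ = n := by
    have : Fact (finrank ℝ E = n + 1) := ⟨by
      have := (Module.finrank_pos_iff_exists_ne_zero (R := ℝ)).mpr
        ⟨x, norm_ne_zero_iff.mp (by simp [hx])⟩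
      omega⟩
    exact Submodule.finrank_orthogonal_span_singleton (norm_ne_zero_iff.mp (by simp [hv]))
  set B := μH[n] (ball (0 : (ℝ ∙ -x)ᗮ) 1)
  have hB : B ≠ ⊤ := by
    have := (measure_ball_lt_top (μ := μH[finrank ℝ (ℝ ∙ -x)ᗮ]) (x := (0 : (ℝ ∙ -x)ᗮ)) (r := 1))
    rw [hK] at this
    exact this.ne
  refine ⟨2 * ENNReal.ofReal (2 ^ n) * B, by finiteness, fun r hr ↦ ?_⟩
  have hf := lipschitzWith_stereoInvFunAux hv
  have h₁ := hausdorffMeasure_image_closedBall_le hf 0 (by positivity : 0 ≤ 2 * r)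
  have h₂ := hausdorffMeasure_image_closedBall_le hf.neg 0 (by positivity : 0 ≤ 2 * r)
  rw [ENNReal.coe_one, ENNReal.one_rpow, one_mul, hK] at h₁ h₂
  calc μH[n] (sphere (0 : E) 1 ∩ ball x r)
      ≤ μH[n] ((fun w : (ℝ ∙ -x)ᗮ ↦ stereoInvFunAux (-x) w) '' closedBall 0 (2 * r) ∪
          (fun w : (ℝ ∙ -x)ᗮ ↦ -stereoInvFunAux (-x) w) '' closedBall 0 (2 * r)) :=
        measure_mono (by simpa using sphere_inter_ball_neg_subset hv r)
    _ ≤ ENNReal.ofReal ((2 * r) ^ n) * B + ENNReal.ofReal ((2 * r) ^ n) * B :=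
        (measure_union_le _ _).trans (add_le_add h₁ h₂)
    _ = 2 * ENNReal.ofReal (2 ^ n) * B * ENNReal.ofReal (r ^ n) := by
        rw [mul_pow, ENNReal.ofReal_mul (by positivity)]
        ring
end StereographicCaps

/-- The dyadic kernel estimate on the sphere:
`∫_{S^{d-1}} (1 + 2^k |e₁ - y|)^{-d} dσ(y) ≤ C 2^{-k(d-1)}`. -/
theorem stmt18 (d : ℕ) (hd : 2 ≤ d) :
    ∃ C > (0 : ℝ), ∀ k : ℕ,
      ∫ y, (1 + (2 : ℝ) ^ k * ‖EuclideanSpace.single (⟨0, by omega⟩ : Fin d) (1 : ℝ) - y‖) ^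
          (-(d : ℝ)) ∂(sphereMeasure d) ≤
        C * (2 : ℝ) ^ (-((k : ℝ) * (d - 1))) := by
  set e := EuclideanSpace.single (⟨0, by omega⟩ : Fin d) (1 : ℝ)
  obtain ⟨A, hA, hcap⟩ := exists_hausdorffMeasure_sphere_inter_ball_le (x := e) (by simp [e])
  rw [finrank_euclideanSpace_fin] at hcap
  have hball : ∀ r > 0, sphereMeasure d (ball e r) ≤ A * ENNReal.ofReal (r ^ ((d : ℝ) - 1)) := by
    intro r hr
    rw [sphereMeasure, Measure.restrict_apply measurableSet_ball, inter_comm,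
      ← Nat.cast_pred (by omega), rpow_natCast]
    exact hcap r hr
  obtain ⟨C, hC, hint⟩ := exists_integral_one_add_mul_dist_rpow_neg_le hA (Nat.cast_nonneg d)
    (sub_one_lt (d : ℝ)) hball
  refine ⟨C, hC, fun k ↦ ?_⟩
  have h := hint (2 ^ k) (by positivity)
  have hk : ((2 : ℝ) ^ k) ^ (-((d : ℝ) - 1)) = 2 ^ (-((k : ℝ) * (d - 1))) := by
    rw [← rpow_natCast, ← rpow_mul zero_le_two, mul_neg]
  simpa only [dist_eq_norm, hk] using h
end
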